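/- Let W_1,...,W_M be m×n real matrices with mean W̄ = (1/M)∑_j W_j, let X be a p×n real matrix with XX' invertible, and set B̄ = (XX')⁻¹ X W̄'. Define S_w = ∑_{j=1}^M (W_j - W̄)(W_j - W̄)' and S_mean = (W̄ - B̄'X)(W̄ - B̄'X)'. Let W_a and X_a be the horizontal concatenations of the W_j and of M copies of X respectively, and B_a = (X_a X_a')⁻¹ X_a W_a'. Then S_w + M·S_mean = (W_a - B_a'X_a)(W_a - B_a'X_a)'. -/
import Mathlib


open Matrix

theorem stmt11 {m n p M : ℕ} (hM : 1 ≤ M)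
    (W : Fin M → Matrix (Fin m) (Fin n) ℝ)
    (X : Matrix (Fin p) (Fin n) ℝ) (hX : IsUnit (X * Xᵀ).det)
    (Wbar : Matrix (Fin m) (Fin n) ℝ) (hWbar : Wbar = (1 / (M : ℝ)) • ∑ j, W j)
    (Bbar : Matrix (Fin p) (Fin m) ℝ) (hBbar : Bbar = (X * Xᵀ)⁻¹ * X * Wbarᵀ)
    (Wa : Matrix (Fin m) (Fin M × Fin n) ℝ) (hWa : ∀ i jk, Wa i jk = W jk.1 i jk.2)
    (Xa : Matrix (Fin p) (Fin M × Fin n) ℝ) (hXa : ∀ i jk, Xa i jk = X i jk.2)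
    (Ba : Matrix (Fin p) (Fin m) ℝ) (hBa : Ba = (Xa * Xaᵀ)⁻¹ * Xa * Waᵀ) :
    (∑ j, (W j - Wbar) * (W j - Wbar)ᵀ) +
        (M : ℝ) • ((Wbar - Bbarᵀ * X) * (Wbar - Bbarᵀ * X)ᵀ) =
      (Wa - Baᵀ * Xa) * (Wa - Baᵀ * Xa)ᵀ := by
  have hM0 : (M : ℝ) ≠ 0 := by
    exact_mod_cast Nat.one_le_iff_ne_zero.mp hM
  haveI : Invertible (M : ℝ) := invertibleOfNonzero hM0
  set C := Bbarᵀ * X with hC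
  -- Xa * Xaᵀ = M • (X * Xᵀ)
  have hXaXa : Xa * Xaᵀ = (M : ℝ) • (X * Xᵀ) := by
    ext i i'
    simp [Matrix.mul_apply, hXa, Fintype.sum_prod_type, Matrix.smul_apply,
      Finset.sum_const, nsmul_eq_mul]
  -- Xa * Waᵀ = M • (X * Wbarᵀ)
  have hXaWa : Xa * Waᵀ = (M : ℝ) • (X * Wbarᵀ) := by
    have h1 : (M : ℝ) • (X * Wbarᵀ) = X * (∑ j, W j)ᵀ := by
      rw [hWbar]
      rw [Matrix.transpose_smul, Matrix.mul_smul, smul_smul]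
      rw [mul_one_div, div_self hM0, one_smul]
    rw [h1]
    ext i i'
    simp [Matrix.mul_apply, hXa, hWa, Fintype.sum_prod_type, Matrix.sum_apply,
      Finset.mul_sum]
    rw [Finset.sum_comm]
  have hBaBbar : Ba = Bbar := by
    rw [hBa, hBbar, Matrix.mul_assoc, hXaXa, hXaWa, Matrix.inv_smul (X * Xᵀ) (M:ℝ) hX,
      Matrix.smul_mul, Matrix.mul_smul, smul_smul, invOf_mul_self, one_smul,
      Matrix.mul_assoc]
  -- RHS = ∑ j, (W j - C) * (W j - C)ᵀ
  have hRHS : (Wa - Baᵀ * Xa) * (Wa - Baᵀ * Xa)ᵀ = ∑ j, (W j - C) * (W j - C)ᵀ := by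
    rw [hBaBbar]
    ext i i'
    simp [Matrix.mul_apply, Matrix.sub_apply, hWa, hXa, hC, Matrix.sum_apply,
      Fintype.sum_prod_type]
  rw [hRHS]
  have hsum0 : ∑ j, (W j - Wbar) = 0 := by
    rw [Finset.sum_sub_distrib, Finset.sum_const, Finset.card_fin, hWbar,
      ← Nat.cast_smul_eq_nsmul ℝ, smul_smul, mul_one_div, div_self hM0,
      one_smul, sub_self]
  have hexp : ∀ j : Fin M, (W j - C) * (W j - C)ᵀ =
      (W j - Wbar) * (W j - Wbar)ᵀ + (W j - Wbar) * (Wbar - C)ᵀ +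
      (Wbar - C) * (W j - Wbar)ᵀ + (Wbar - C) * (Wbar - C)ᵀ := by
    intro j
    have h : W j - C = (W j - Wbar) + (Wbar - C) := by abel
    rw [h, Matrix.transpose_add, Matrix.add_mul, Matrix.mul_add, Matrix.mul_add]
    abel
  rw [Finset.sum_congr rfl (fun j _ => hexp j)]
  simp only [Finset.sum_add_distrib]
  rw [← Matrix.sum_mul, hsum0, Matrix.zero_mul, add_zero,
    ← Matrix.mul_sum, ← Matrix.transpose_sum, hsum0, Matrix.transpose_zero,
    Matrix.mul_zero, add_zero, Finset.sum_const, Finset.card_fin,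
    Nat.cast_smul_eq_nsmul]
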